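/- arXiv:2601.09837 — 6 statements merged into one kernel-verified Lean document; each statement's English description precedes it below -/
import Mathlib

section
/- Let Z be a finite set, let P₀ and P₁ be probability mass functions on Z with the support of P₁ contained in the support of P₀, and let δ ∈ [0,1]. Then the Kullback–Leibler divergence of the mixture (1−δ)P₀ + δP₁ from P₀ satisfies D((1−δ)P₀ + δP₁ ‖ P₀) ≤ δ² · χ²(P₁ ‖ P₀). -/
/-!
The mixture `M = (1 - δ) P₀ + δ P₁` satisfies `M - P₀ = δ (P₁ - P₀)`, so `χ²(M ‖ P₀) = δ² χ²(P₁ ‖ P₀)`,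
and it remains to bound `D(M ‖ P₀)` by `χ²(M ‖ P₀)`. Termwise, `log x ≤ x - 1` gives
`m log (m / q) ≤ m² / q - m = (m - q)² / q + (m - q)`, and the correction terms `m - q` sum to zero
because `M` and `P₀` have the same total mass.
-/

open scoped BigOperators

/-- `P` is a probability mass function on the finite set `Z`. -/
def IsPmf {Z : Type*} [Fintype Z] (P : Z → ℝ) : Prop :=
  (∀ z, 0 ≤ P z) ∧ ∑ z, P z = 1

/-- Kullback–Leibler divergence (natural log, terms with `P z = 0` contribute `0`). -/
noncomputable def klDiv {Z : Type*} [Fintype Z] (P Q : Z → ℝ) : ℝ :=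
  ∑ z, if 0 < P z then P z * Real.log (P z / Q z) else 0

/-- Chi-squared distance, the sum restricted to `z` with `Q z > 0`. -/
noncomputable def chiSq {Z : Type*} [Fintype Z] (P Q : Z → ℝ) : ℝ :=
  ∑ z, if 0 < Q z then (P z - Q z) ^ 2 / Q z else 0

open Finset Real

theorem mul_log_div_le_sq_div_add_sub {p q : ℝ} (hp : 0 ≤ p) (hq : 0 ≤ q) (hpq : q = 0 → p = 0) :
    p * log (p / q) ≤ (p - q) ^ 2 / q + (p - q) := by
  rcases hq.eq_or_lt with rfl | hq
  · simp [hpq rfl]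
  rcases hp.eq_or_lt with rfl | hp
  · field_simp
    simp
  calc p * log (p / q) ≤ p * (p / q - 1) :=
        mul_le_mul_of_nonneg_left (log_le_sub_one_of_pos (div_pos hp hq)) hp.le
    _ = (p - q) ^ 2 / q + (p - q) := by field_simp; ring

section

variable {Z : Type*} [Fintype Z]

theorem klDiv_eq_sum_of_nonneg {P : Z → ℝ} (hP : ∀ z, 0 ≤ P z) (Q : Z → ℝ) :
    klDiv P Q = ∑ z, P z * log (P z / Q z) := by
  refine sum_congr rfl fun z _ => ?_
  rcases (hP z).eq_or_lt with h | h
  · simp [← h]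
  · exact if_pos h

-- Since `x / 0 = 0`, the terms with `Q z = 0` vanish without the restriction in `chiSq`.
theorem chiSq_eq_sum_of_nonneg (P : Z → ℝ) {Q : Z → ℝ} (hQ : ∀ z, 0 ≤ Q z) :
    chiSq P Q = ∑ z, (P z - Q z) ^ 2 / Q z := by
  refine sum_congr rfl fun z _ => ?_
  rcases (hQ z).eq_or_lt with h | h
  · simp [← h]
  · exact if_pos h

theorem klDiv_le_chiSq {P Q : Z → ℝ} (hP : ∀ z, 0 ≤ P z) (hQ : ∀ z, 0 ≤ Q z)
    (hPQ : ∀ z, Q z = 0 → P z = 0) (hmass : ∑ z, P z = ∑ z, Q z) :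
    klDiv P Q ≤ chiSq P Q := by
  calc klDiv P Q = ∑ z, P z * log (P z / Q z) := klDiv_eq_sum_of_nonneg hP Q
    _ ≤ ∑ z, ((P z - Q z) ^ 2 / Q z + (P z - Q z)) :=
        sum_le_sum fun z _ => mul_log_div_le_sq_div_add_sub (hP z) (hQ z) (hPQ z)
    _ = chiSq P Q := by
        rw [sum_add_distrib, sum_sub_distrib, hmass, sub_self, add_zero,
          chiSq_eq_sum_of_nonneg P hQ]

theorem chiSq_mixture (P Q : Z → ℝ) (δ : ℝ) :
    chiSq (fun z => (1 - δ) * Q z + δ * P z) Q = δ ^ 2 * chiSq P Q := by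
  simp only [chiSq, mul_sum, mul_ite, mul_zero]
  refine sum_congr rfl fun z _ => ?_
  congr 1
  ring

end

theorem klDiv_mixture_le_sq_mul_chiSq {Z : Type*} [Fintype Z]
    (P0 P1 : Z → ℝ) (hP0 : IsPmf P0) (hP1 : IsPmf P1)
    (hsupp : ∀ z, P0 z = 0 → P1 z = 0)
    (δ : ℝ) (hδ0 : 0 ≤ δ) (hδ1 : δ ≤ 1) :
    klDiv (fun z => (1 - δ) * P0 z + δ * P1 z) P0 ≤ δ ^ 2 * chiSq P1 P0 := by
  obtain ⟨hP0_nonneg, hP0_sum⟩ := hP0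
  obtain ⟨hP1_nonneg, hP1_sum⟩ := hP1
  rw [← chiSq_mixture]
  refine klDiv_le_chiSq (fun z => ?_) hP0_nonneg (fun z hz => ?_) ?_
  · exact add_nonneg (mul_nonneg (sub_nonneg.2 hδ1) (hP0_nonneg z)) (mul_nonneg hδ0 (hP1_nonneg z))
  · simp [hz, hsupp z hz]
  · simp only [sum_add_distrib, ← mul_sum, hP0_sum, hP1_sum]
    ring
end

section
/- Let Z be a finite set, let n ≥ 1, let P be a probability mass function on Zⁿ with one-dimensional marginals P₁, …, Pₙ (where P_i(z) = Σ_{zⁿ : z_i = z} P(zⁿ)), and let Q be a probability mass function on Z. Then D(P ‖ Q^{⊗n}) ≥ Σ_{i=1}^n D(P_i ‖ Q). -/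
/-!
STATEMENT 3: For a pmf `P` on `Zⁿ` with one-dimensional marginals `P_1, …, P_n` and a pmf `Q`
on `Z`, `D(P ‖ Q^{⊗n}) ≥ Σ_{i=1}^n D(P_i ‖ Q)` (KL divergences taking values in the extended
reals, with `D(P‖Q) = +∞` when `P` is not absolutely continuous w.r.t. `Q`).
-/

open scoped BigOperators Classical

/-- Extended-real Kullback–Leibler divergence: equals `+∞` if `P` is not absolutely
continuous with respect to `Q`. -/
noncomputable def klDivE {Z : Type*} [Fintype Z] (P Q : Z → ℝ) : EReal :=
  if ∀ z, Q z = 0 → P z = 0 then ((klDiv P Q : ℝ) : EReal) else ⊤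

/-- The `n`-fold product pmf on `Fin n → Z`. -/
noncomputable def prodPmf {Z : Type*} [Fintype Z] (P : Z → ℝ) (n : ℕ) : (Fin n → Z) → ℝ :=
  fun x => ∏ i, P (x i)

/-- The `i`-th one-dimensional marginal of a pmf on `Fin n → Z`. -/
noncomputable def marginal {Z : Type*} [Fintype Z] {n : ℕ}
    (P : (Fin n → Z) → ℝ) (i : Fin n) : Z → ℝ :=
  fun z => ∑ x ∈ Finset.univ.filter (fun x : Fin n → Z => x i = z), P x

/-!
Averaging `log (P / Qⁿ) = log (P / ∏ᵢ Pᵢ) + ∑ᵢ log (Pᵢ(xᵢ) / Q(xᵢ))` against `P` gives the chain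
rule `D(P ‖ Qⁿ) = D(P ‖ P₁ ⊗ ⋯ ⊗ Pₙ) + ∑ᵢ D(Pᵢ ‖ Q)`, and the first term is nonnegative by Gibbs'
inequality because `P₁ ⊗ ⋯ ⊗ Pₙ` is again a pmf, positive wherever `P` is. Without absolute
continuity the right-hand side is `+∞`.
-/

open Finset Real

section KLDivergence

variable {α : Type*} [Fintype α]

theorem klDiv_eq_sum_mul_log {P : α → ℝ} (hP : ∀ a, 0 ≤ P a) (Q : α → ℝ) :
    klDiv P Q = ∑ a, P a * log (P a / Q a) := by
  refine sum_congr rfl fun a _ => ?_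
  rcases (hP a).lt_or_eq with ha | ha
  · rw [if_pos ha]
  · simp [← ha]

theorem klDivE_of_forall_eq_zero {P Q : α → ℝ} (h : ∀ a, Q a = 0 → P a = 0) :
    klDivE P Q = klDiv P Q :=
  if_pos h

theorem klDivE_eq_top {P Q : α → ℝ} (h : ¬∀ a, Q a = 0 → P a = 0) : klDivE P Q = ⊤ :=
  if_neg h

theorem klDiv_nonneg {P R : α → ℝ} (hP : ∀ a, 0 ≤ P a) (hR : ∀ a, 0 ≤ R a)
    (hRP : ∑ a, R a ≤ ∑ a, P a) (hPR : ∀ a, R a = 0 → P a = 0) : 0 ≤ klDiv P R := by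
  have hterm : ∀ a, P a - R a ≤ P a * log (P a / R a) := by
    intro a
    rcases (hP a).lt_or_eq with ha | ha
    · have hRa : 0 < R a := (hR a).lt_of_ne fun h => ha.ne' (hPR a h.symm)
      have := mul_le_mul_of_nonneg_left (one_sub_inv_le_log_of_pos (div_pos ha hRa)) ha.le
      rwa [inv_div, mul_sub, mul_one, mul_div_cancel₀ _ ha.ne'] at this
    · simp [← ha, hR a]
  calc 0 ≤ ∑ a, (P a - R a) := by rw [sum_sub_distrib]; linarith
    _ ≤ klDiv P R := by rw [klDiv_eq_sum_mul_log hP]; exact sum_le_sum fun a _ => hterm a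

end KLDivergence

@[norm_cast]
theorem EReal.coe_finsetSum {ι : Type*} (s : Finset ι) (f : ι → ℝ) :
    ((∑ i ∈ s, f i : ℝ) : EReal) = ∑ i ∈ s, (f i : EReal) :=
  map_sum (⟨⟨(↑), EReal.coe_zero⟩, EReal.coe_add⟩ : ℝ →+ EReal) f s

theorem log_div_prod_eq_add_sum_log_div {ι : Type*} {s : Finset ι} {p : ℝ} {q m : ι → ℝ}
    (hp : p ≠ 0) (hq : ∀ i ∈ s, q i ≠ 0) (hm : ∀ i ∈ s, m i ≠ 0) :
    log (p / ∏ i ∈ s, q i) = log (p / ∏ i ∈ s, m i) + ∑ i ∈ s, log (m i / q i) := by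
  rw [log_div hp (prod_ne_zero_iff.2 hq), log_div hp (prod_ne_zero_iff.2 hm), log_prod hq,
    log_prod hm, sum_congr rfl fun i hi => log_div (hm i hi) (hq i hi), sum_sub_distrib]
  ring

namespace marginal

variable {Z : Type*} [Fintype Z] {n : ℕ}

theorem sum_mul (P : (Fin n → Z) → ℝ) (i : Fin n) (f : Z → ℝ) :
    ∑ z, marginal P i z * f z = ∑ x, P x * f (x i) := by
  simp_rw [marginal, Finset.sum_mul]
  rw [← sum_fiberwise univ (fun x => x i) fun x => P x * f (x i)]
  refine sum_congr rfl fun z _ => sum_congr rfl fun x hx => ?_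
  rw [(mem_filter.1 hx).2]

theorem sum_eq (P : (Fin n → Z) → ℝ) (i : Fin n) : ∑ z, marginal P i z = ∑ x, P x := by
  simpa using sum_mul P i 1

theorem nonneg {P : (Fin n → Z) → ℝ} (hP : ∀ x, 0 ≤ P x) (i : Fin n) (z : Z) :
    0 ≤ marginal P i z :=
  sum_nonneg fun x _ => hP x

theorem le_apply {P : (Fin n → Z) → ℝ} (hP : ∀ x, 0 ≤ P x) (i : Fin n) (x : Fin n → Z) :
    P x ≤ marginal P i (x i) :=
  single_le_sum (fun y _ => hP y) (by simp)

theorem eq_zero_of_prodPmf {P : (Fin n → Z) → ℝ} {Q : Z → ℝ}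
    (hPQ : ∀ x, prodPmf Q n x = 0 → P x = 0) (i : Fin n) {z : Z} (hz : Q z = 0) :
    marginal P i z = 0 :=
  sum_eq_zero fun x hx => hPQ x <| prod_eq_zero (mem_univ i) <| by rwa [(mem_filter.1 hx).2]

end marginal

section marginalProd

variable {Z : Type*} [Fintype Z] {n : ℕ}

noncomputable def marginalProd (P : (Fin n → Z) → ℝ) : (Fin n → Z) → ℝ :=
  fun x => ∏ i, marginal P i (x i)

theorem marginalProd_nonneg {P : (Fin n → Z) → ℝ} (hP : ∀ x, 0 ≤ P x) (x : Fin n → Z) :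
    0 ≤ marginalProd P x :=
  prod_nonneg fun i _ => marginal.nonneg hP i (x i)

theorem sum_marginalProd (P : (Fin n → Z) → ℝ) :
    ∑ x, marginalProd P x = (∑ x, P x) ^ n := by
  simp only [marginalProd, ← Fintype.prod_sum, marginal.sum_eq, prod_const, card_univ,
    Fintype.card_fin]

theorem eq_zero_of_marginalProd_eq_zero {P : (Fin n → Z) → ℝ} (hP : ∀ x, 0 ≤ P x)
    {x : Fin n → Z} (hx : marginalProd P x = 0) : P x = 0 := by
  obtain ⟨i, -, hi⟩ := prod_eq_zero_iff.1 hx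
  exact le_antisymm (hi ▸ marginal.le_apply hP i x) (hP x)

theorem klDiv_prodPmf_eq_klDiv_marginalProd_add {P : (Fin n → Z) → ℝ} (hP : ∀ x, 0 ≤ P x)
    {Q : Z → ℝ} (hPQ : ∀ x, prodPmf Q n x = 0 → P x = 0) :
    klDiv P (prodPmf Q n) = klDiv P (marginalProd P) + ∑ i, klDiv (marginal P i) Q := by
  simp only [klDiv_eq_sum_mul_log hP, klDiv_eq_sum_mul_log (marginal.nonneg hP _),
    marginal.sum_mul]
  rw [sum_comm, ← sum_add_distrib]
  refine sum_congr rfl fun x _ => ?_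
  rcases (hP x).lt_or_eq with hx | hx
  · have hQ : ∀ i ∈ univ, Q (x i) ≠ 0 := fun i _ hQi =>
      hx.ne' <| hPQ x <| prod_eq_zero (mem_univ i) hQi
    have hm : ∀ i ∈ univ, marginal P i (x i) ≠ 0 := fun i _ =>
      (hx.trans_le (marginal.le_apply hP i x)).ne'
    rw [← mul_sum, ← mul_add]
    exact congrArg _ (log_div_prod_eq_add_sum_log_div hx.ne' hQ hm)
  · simp [← hx]

end marginalProd

theorem sum_klDiv_marginal_le_klDiv_prod_general {Z : Type*} [Fintype Z]
    (n : ℕ) (P : (Fin n → Z) → ℝ) (hP : IsPmf P)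
    (Q : Z → ℝ) :
    ∑ i : Fin n, klDivE (marginal P i) Q ≤ klDivE P (prodPmf Q n) := by
  by_cases hPQ : ∀ x, prodPmf Q n x = 0 → P x = 0
  · have hGibbs : 0 ≤ klDiv P (marginalProd P) :=
      klDiv_nonneg hP.1 (marginalProd_nonneg hP.1) (by rw [sum_marginalProd, hP.2, one_pow])
        fun x => eq_zero_of_marginalProd_eq_zero hP.1
    have hPi : ∀ i, klDivE (marginal P i) Q = klDiv (marginal P i) Q := fun i =>
      klDivE_of_forall_eq_zero fun _ => marginal.eq_zero_of_prodPmf hPQ i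
    rw [klDivE_of_forall_eq_zero hPQ, sum_congr rfl fun i _ => hPi i,
      klDiv_prodPmf_eq_klDiv_marginalProd_add hP.1 hPQ]
    exact_mod_cast le_add_of_nonneg_left hGibbs
  · rw [klDivE_eq_top hPQ]
    exact le_top

theorem sum_klDiv_marginal_le_klDiv_prod {Z : Type*} [Fintype Z]
    (n : ℕ) (hn : 1 ≤ n) (P : (Fin n → Z) → ℝ) (hP : IsPmf P)
    (Q : Z → ℝ) (hQ : IsPmf Q) :
    ∑ i : Fin n, klDivE (marginal P i) Q ≤ klDivE P (prodPmf Q n) :=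
  sum_klDiv_marginal_le_klDiv_prod_general n P hP Q
end

section
/- Let U and V be finite sets and let P_{UV} and Q_{UV} be probability mass functions on U × V such that P_{UV}(u,v) = 0 whenever Q_{UV}(u,v) = 0; denote by P_U, P_V, Q_V the corresponding marginals and Q_{U|V}(u|v) = Q_{UV}(u,v)/Q_V(v) for Q_V(v) > 0. Define T_U(u) := Σ_v P_V(v) Q_{U|V}(u|v). If T_U ≠ P_U, then every probability mass function π_{UV} on U × V with U-marginal equal to P_U and V-marginal equal to P_V satisfies D(π_{UV} ‖ Q_{UV}) > D(P_V ‖ Q_V). -/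
/-!
Let `R(u,v) := P_V(v) Q_{U|V}(u|v)`, the law obtained from `Q` by replacing its `V`-marginal with
`P_V`. For `π ≪ Q` with `V`-marginal `P_V`, the chain rule gives
`D(π ‖ Q) = D(π ‖ R) + D(P_V ‖ Q_V)`. The `U`-marginal of `R` is `T_U ≠ P_U = π_U`, so `π ≠ R`
and Gibbs' inequality makes `D(π ‖ R)` strictly positive. If `π` is not absolutely continuous
with respect to `Q`, the right-hand side is `+∞` while the left-hand side is finite.
-/

open scoped BigOperators

open InformationTheory (klFun klFun_apply klFun_zero klFun_nonneg klFun_eq_zero_iff)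

section Gibbs

variable {Z : Type*} [Fintype Z]

def AbsCont (P Q : Z → ℝ) : Prop := ∀ z, Q z = 0 → P z = 0

lemma klDivE_of_absCont {P Q : Z → ℝ} (h : AbsCont P Q) : klDivE P Q = (klDiv P Q : EReal) :=
  if_pos h

lemma klDivE_of_not_absCont {P Q : Z → ℝ} (h : ¬ AbsCont P Q) : klDivE P Q = ⊤ :=
  if_neg h

lemma ite_pos_mul_eq {a : ℝ} (ha : 0 ≤ a) (c : ℝ) : (if 0 < a then a * c else 0) = a * c := by
  rcases ha.eq_or_lt with rfl | ha
  · simp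
  · rw [if_pos ha]

lemma ite_mul_log_div_eq_mul_klFun {a b : ℝ} (ha : 0 ≤ a) (hb : 0 ≤ b) (hab : b = 0 → a = 0) :
    (if 0 < a then a * Real.log (a / b) else 0) = b * klFun (a / b) + a - b := by
  rcases hb.eq_or_lt with rfl | hb
  · simp [hab rfl]
  rcases ha.eq_or_lt with rfl | ha
  · simp [klFun_zero]
  rw [if_pos ha, klFun_apply]
  field_simp
  ring

lemma klDiv_eq_sum_mul_klFun {P Q : Z → ℝ} (hP : ∀ z, 0 ≤ P z) (hQ : ∀ z, 0 ≤ Q z)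
    (hmass : ∑ z, P z = ∑ z, Q z) (hPQ : AbsCont P Q) :
    klDiv P Q = ∑ z, Q z * klFun (P z / Q z) := by
  unfold klDiv
  simp only [fun z => ite_mul_log_div_eq_mul_klFun (hP z) (hQ z) (hPQ z), Finset.sum_sub_distrib,
    Finset.sum_add_distrib, hmass, add_sub_cancel_right]

theorem klDiv_pos {P Q : Z → ℝ} (hP : ∀ z, 0 ≤ P z) (hQ : ∀ z, 0 ≤ Q z)
    (hmass : ∑ z, P z = ∑ z, Q z) (hPQ : AbsCont P Q) (hne : P ≠ Q) : 0 < klDiv P Q := by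
  rw [klDiv_eq_sum_mul_klFun hP hQ hmass hPQ]
  obtain ⟨z, hz⟩ := Function.ne_iff.mp hne
  have hQz : 0 < Q z := (hQ z).lt_of_ne fun h => hz (by rw [← h, hPQ z h.symm])
  refine Finset.sum_pos' (fun z _ => mul_nonneg (hQ z) (klFun_nonneg (div_nonneg (hP z) (hQ z))))
    ⟨z, Finset.mem_univ z, mul_pos hQz ?_⟩
  refine (klFun_nonneg (div_nonneg (hP z) hQz.le)).lt_of_ne fun h => hz ?_
  rwa [eq_comm, klFun_eq_zero_iff (div_nonneg (hP z) hQz.le), div_eq_one_iff_eq hQz.ne'] at h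

end Gibbs

section Marginals

variable {U V : Type*} [Fintype U]

def sndMarginal (P : U × V → ℝ) (v : V) : ℝ := ∑ u, P (u, v)

/-- `μ(v) Q_{U|V}(u|v)`, which is `0` where `Q_V(v) = 0` because `x / 0 = 0`. -/
noncomputable def withSndMarginal (Q : U × V → ℝ) (μ : V → ℝ) : U × V → ℝ :=
  fun p => μ p.2 * (Q p / sndMarginal Q p.2)

lemma eq_zero_of_sndMarginal_eq_zero {P : U × V → ℝ} (hP : ∀ p, 0 ≤ P p) {v : V}
    (h : sndMarginal P v = 0) (u : U) : P (u, v) = 0 :=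
  (Finset.sum_eq_zero_iff_of_nonneg fun u _ => hP (u, v)).mp h u (Finset.mem_univ u)

lemma sndMarginal_nonneg {P : U × V → ℝ} (hP : ∀ p, 0 ≤ P p) (v : V) : 0 ≤ sndMarginal P v :=
  Finset.sum_nonneg fun u _ => hP (u, v)

lemma isPmf_sndMarginal [Fintype V] {P : U × V → ℝ} (hP : IsPmf P) : IsPmf (sndMarginal P) :=
  ⟨sndMarginal_nonneg hP.1, by simp only [sndMarginal, ← Fintype.sum_prod_type_right, hP.2]⟩

lemma absCont_sndMarginal {P Q : U × V → ℝ} (hPQ : AbsCont P Q) (hQ : ∀ p, 0 ≤ Q p) :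
    AbsCont (sndMarginal P) (sndMarginal Q) := fun v h =>
  Finset.sum_eq_zero fun u _ => hPQ (u, v) (eq_zero_of_sndMarginal_eq_zero hQ h u)

lemma sndMarginal_withSndMarginal {Q : U × V → ℝ} {μ : V → ℝ}
    (hμ : AbsCont μ (sndMarginal Q)) : sndMarginal (withSndMarginal Q μ) = μ := by
  funext v
  by_cases hv : sndMarginal Q v = 0
  · simp [sndMarginal, withSndMarginal, hμ v hv]
  · simp only [sndMarginal, withSndMarginal, ← Finset.mul_sum, ← Finset.sum_div] at hv ⊢
    rw [div_self hv, mul_one]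

lemma isPmf_withSndMarginal [Fintype V] {Q : U × V → ℝ} {μ : V → ℝ} (hQ : ∀ p, 0 ≤ Q p)
    (hμ : IsPmf μ) (hμQ : AbsCont μ (sndMarginal Q)) : IsPmf (withSndMarginal Q μ) := by
  refine ⟨fun p => mul_nonneg (hμ.1 p.2) (div_nonneg (hQ p) (sndMarginal_nonneg hQ p.2)), ?_⟩
  rw [Fintype.sum_prod_type_right, ← hμ.2]
  exact Finset.sum_congr rfl fun v _ => congrFun (sndMarginal_withSndMarginal hμQ) v

lemma absCont_withSndMarginal_sndMarginal {π Q : U × V → ℝ} (hπ : ∀ p, 0 ≤ π p)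
    (hQ : ∀ p, 0 ≤ Q p) (hπQ : AbsCont π Q) : AbsCont π (withSndMarginal Q (sndMarginal π)) := by
  intro p h
  rcases mul_eq_zero.mp h with h | h
  · exact eq_zero_of_sndMarginal_eq_zero hπ h p.1
  rcases div_eq_zero_iff.mp h with h | h
  · exact hπQ p h
  · exact hπQ p (eq_zero_of_sndMarginal_eq_zero hQ h p.1)

lemma sum_ite_mul_log_div_sndMarginal [Fintype V] {π Q : U × V → ℝ} (hπ : ∀ p, 0 ≤ π p) :
    ∑ p, (if 0 < π p then π p * Real.log (sndMarginal π p.2 / sndMarginal Q p.2) else 0) =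
      klDiv (sndMarginal π) (sndMarginal Q) := by
  rw [klDiv, Fintype.sum_prod_type_right]
  refine Finset.sum_congr rfl fun v _ => ?_
  rw [ite_pos_mul_eq (sndMarginal_nonneg hπ v)]
  simp only [ite_pos_mul_eq (hπ _), ← Finset.sum_mul, sndMarginal]

theorem klDiv_eq_klDiv_withSndMarginal_add [Fintype V] {π Q : U × V → ℝ} (hπ : ∀ p, 0 ≤ π p)
    (hQ : ∀ p, 0 ≤ Q p) (hπQ : AbsCont π Q) :
    klDiv π Q = klDiv π (withSndMarginal Q (sndMarginal π)) +
      klDiv (sndMarginal π) (sndMarginal Q) := by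
  have hlog : ∀ p, 0 < π p → Real.log (π p / Q p) =
      Real.log (π p / withSndMarginal Q (sndMarginal π) p) +
        Real.log (sndMarginal π p.2 / sndMarginal Q p.2) := by
    intro p hp
    have hQp : 0 < Q p := (hQ p).lt_of_ne fun h => hp.ne' (hπQ p h.symm)
    have hQV : 0 < sndMarginal Q p.2 := (sndMarginal_nonneg hQ p.2).lt_of_ne fun h =>
      hp.ne' (hπQ p (eq_zero_of_sndMarginal_eq_zero hQ h.symm p.1))
    have hπV : 0 < sndMarginal π p.2 := (sndMarginal_nonneg hπ p.2).lt_of_ne fun h =>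
      hp.ne' (eq_zero_of_sndMarginal_eq_zero hπ h.symm p.1)
    rw [withSndMarginal, ← Real.log_mul (by positivity) (by positivity)]
    congr 1
    field_simp
  rw [← sum_ite_mul_log_div_sndMarginal hπ, klDiv, klDiv, ← Finset.sum_add_distrib]
  refine Finset.sum_congr rfl fun p _ => ?_
  by_cases hp : 0 < π p
  · simp only [if_pos hp, hlog p hp, mul_add]
  · simp only [if_neg hp, add_zero]

end Marginals

theorem klDiv_gt_of_TU_ne_PU {U V : Type*} [Fintype U] [Fintype V]
    (P Q : U × V → ℝ) (hP : IsPmf P) (hQ : IsPmf Q)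
    (habs : ∀ p, Q p = 0 → P p = 0)
    (hTU : (fun u => ∑ v, (∑ u', P (u', v)) * (Q (u, v) / ∑ u', Q (u', v))) ≠
           (fun u => ∑ v, P (u, v))) :
    ∀ π : U × V → ℝ, IsPmf π →
      (∀ u, ∑ v, π (u, v) = ∑ v, P (u, v)) →
      (∀ v, ∑ u, π (u, v) = ∑ u, P (u, v)) →
      klDivE (fun v => ∑ u, P (u, v)) (fun v => ∑ u, Q (u, v)) < klDivE π Q := by
  intro π hπ hU hV
  have hπV : sndMarginal π = sndMarginal P := funext hV
  change klDivE (sndMarginal P) (sndMarginal Q) < klDivE π Q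
  rw [klDivE_of_absCont (absCont_sndMarginal habs hQ.1)]
  by_cases hπQ : AbsCont π Q
  swap
  · rw [klDivE_of_not_absCont hπQ]
    exact EReal.coe_lt_top _
  have hπR_ac := absCont_withSndMarginal_sndMarginal hπ.1 hQ.1 hπQ
  rw [hπV] at hπR_ac
  set R := withSndMarginal Q (sndMarginal P)
  have hR : IsPmf R := isPmf_withSndMarginal hQ.1 (isPmf_sndMarginal hP)
    (absCont_sndMarginal habs hQ.1)
  have hπR : π ≠ R := fun h => hTU (funext fun u => by rw [← hU u, h]; rfl)
  have hgibbs : 0 < klDiv π R := klDiv_pos hπ.1 hR.1 (hπ.2.trans hR.2.symm) hπR_ac hπR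
  rw [klDivE_of_absCont hπQ, klDiv_eq_klDiv_withSndMarginal_add hπ.1 hQ.1 hπQ, hπV]
  exact_mod_cast lt_add_of_pos_left _ hgibbs
end

section
/- Let U, V, Z be finite sets, let P_{UV} and Q_{UV} be probability mass functions on U × V such that P_{UV}(u,v) = 0 whenever Q_{UV}(u,v) = 0, with marginals P_U, P_V, Q_V, and let Γ₀, Γ₁ be probability mass functions on Z. Define K := sup over probability mass functions π_z on Z of [ D(π_z ‖ Γ₀) − (3/2)·D(π_z ‖ Γ₁) ], define the set 𝒫̄_U := { π_U pmf on U : D(π_U ‖ P_U) ≥ K }, define T_U(u) := Σ_v P_V(v) Q_{U|V}(u|v) where Q_{U|V}(u|v) = Q_{UV}(u,v)/Q_V(v). If T_U ∈ 𝒫̄_U, then every probability mass function π_{UV} on U × V with V-marginal equal to P_V and U-marginal not in 𝒫̄_U satisfies D(π_{UV} ‖ Q_{UV}) > D(P_V ‖ Q_V). -/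
/-!
Write `π_V`, `Q_V` for the `V`-marginals. By the log-sum inequality, for each `v` the
divergence of the `v`-th fibres satisfies `klTerm (π_V v) (Q_V v) ≤ ∑ᵤ klTerm (π(u,v)) (Q(u,v))`,
with equality only when `π(·,v)` is proportional to `Q(·,v)`; summing over `v` gives
`D(π_V‖Q_V) ≤ D(π‖Q)`. If equality held in every fibre, then `π(u,v) = π_V(v) Q_{U|V}(u|v)`,
and since `π_V = P_V` the `U`-marginal of `π` would be `T_U`, which lies in `𝒫̄_U` while
that of `π` does not. Hence some fibre is strict and `D(P_V‖Q_V) = D(π_V‖Q_V) < D(π‖Q)`.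
-/

open scoped BigOperators

/-- `K := sup` over pmfs `π` on `Z` of `D(π‖Γ₀) - (3/2)·D(π‖Γ₁)`, in the extended reals
(in `EReal`, terms with `D(π‖Γ₁) = +∞` equal `-∞`, as in the convention). -/
noncomputable def Ksup {Z : Type*} [Fintype Z] (Γ0 Γ1 : Z → ℝ) : EReal :=
  ⨆ π : {p : Z → ℝ // IsPmf p},
    klDivE (π : Z → ℝ) Γ0 - ((3 / 2 : ℝ) : EReal) * klDivE (π : Z → ℝ) Γ1

open Finset

noncomputable def klTerm (x y : ℝ) : ℝ := if 0 < x then x * Real.log (x / y) else 0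

lemma klDiv_eq_sum_klTerm {Z : Type*} [Fintype Z] (P Q : Z → ℝ) :
    klDiv P Q = ∑ z, klTerm (P z) (Q z) := rfl

section Gibbs

variable {a b c r : ℝ}

lemma sub_lt_klTerm (ha : 0 ≤ a) (hc : 0 ≤ c) (hac : c = 0 → a = 0) (hne : a ≠ c) :
    a - c < klTerm a c := by
  rcases ha.eq_or_lt with rfl | ha
  · have hc : 0 < c := hc.lt_of_ne hne
    simpa [klTerm] using hc
  · have hc : 0 < c := hc.lt_of_ne fun h => ha.ne' (hac h.symm)
    have hlog : Real.log (c / a) < c / a - 1 :=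
      Real.log_lt_sub_one_of_pos (div_pos hc ha) fun h => hne ((div_eq_one_iff_eq ha.ne').mp h).symm
    have hflip : Real.log (a / c) = -Real.log (c / a) := by rw [← Real.log_inv, inv_div]
    calc a - c = -(a * (c / a - 1)) := by field_simp; ring
      _ < -(a * Real.log (c / a)) := neg_lt_neg (mul_lt_mul_of_pos_left hlog ha)
      _ = klTerm a c := by rw [klTerm, if_pos ha, hflip]; ring

lemma sub_le_klTerm (ha : 0 ≤ a) (hc : 0 ≤ c) (hac : c = 0 → a = 0) : a - c ≤ klTerm a c := by
  rcases eq_or_ne a c with rfl | hne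
  · unfold klTerm
    split_ifs with ha
    · simp [div_self ha.ne']
    · simp
  · exact (sub_lt_klTerm ha hc hac hne).le

lemma klTerm_eq_klTerm_mul_add (ha : 0 ≤ a) (hab : b = 0 → a = 0) (hr : 0 < r) :
    klTerm a b = klTerm a (r * b) + a * Real.log r := by
  unfold klTerm
  split_ifs with ha'
  · have hb : b ≠ 0 := fun h => ha'.ne' (hab h)
    rw [← mul_add, ← Real.log_mul (by positivity) hr.ne']
    congr 2
    field_simp
  · simp [le_antisymm (not_lt.mp ha') ha]

end Gibbs

section LogSum

variable {ι : Type*} [Fintype ι] {a b : ι → ℝ}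

lemma sum_klTerm_sub_klTerm_sum (ha : ∀ i, 0 ≤ a i) (hab : ∀ i, b i = 0 → a i = 0)
    (hA : 0 < ∑ i, a i) (hB : 0 < ∑ i, b i) :
    ∑ i, klTerm (a i) (b i) - klTerm (∑ i, a i) (∑ i, b i) =
      ∑ i, (klTerm (a i) ((∑ j, a j) / (∑ j, b j) * b i)
        - (a i - (∑ j, a j) / (∑ j, b j) * b i)) := by
  have hr : 0 < (∑ j, a j) / ∑ j, b j := div_pos hA hB
  simp_rw [klTerm_eq_klTerm_mul_add (ha _) (hab _) hr]
  rw [klTerm, if_pos hA, sum_add_distrib, sum_sub_distrib, sum_sub_distrib, ← sum_mul,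
    ← mul_sum, div_mul_cancel₀ _ hB.ne']
  ring

lemma sum_eq_zero_of_sum_eq_zero (hb : ∀ i, 0 ≤ b i)
    (hab : ∀ i, b i = 0 → a i = 0) (hB : ∑ i, b i = 0) : ∑ i, a i = 0 :=
  sum_eq_zero fun i _ => hab i ((sum_eq_zero_iff_of_nonneg fun i _ => hb i).mp hB i (mem_univ i))

theorem klTerm_sum_le_sum_klTerm (ha : ∀ i, 0 ≤ a i) (hb : ∀ i, 0 ≤ b i)
    (hab : ∀ i, b i = 0 → a i = 0) :
    klTerm (∑ i, a i) (∑ i, b i) ≤ ∑ i, klTerm (a i) (b i) := by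
  rcases (sum_nonneg fun i _ => ha i).eq_or_lt with hA | hA
  · have ha0 : ∀ i, a i = 0 := fun i =>
      (sum_eq_zero_iff_of_nonneg fun i _ => ha i).mp hA.symm i (mem_univ i)
    simp [klTerm, ha0]
  · have hB : 0 < ∑ i, b i := (sum_nonneg fun i _ => hb i).lt_of_ne
      fun h => hA.ne' (sum_eq_zero_of_sum_eq_zero hb hab h.symm)
    have hr := div_pos hA hB
    refine sub_nonneg.mp ((sum_klTerm_sub_klTerm_sum ha hab hA hB).symm ▸ sum_nonneg fun i _ => ?_)
    exact sub_nonneg.mpr (sub_le_klTerm (ha i) (mul_nonneg hr.le (hb i))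
      fun h => hab i ((mul_eq_zero.mp h).resolve_left hr.ne'))

theorem klTerm_sum_lt_sum_klTerm (ha : ∀ i, 0 ≤ a i) (hb : ∀ i, 0 ≤ b i)
    (hab : ∀ i, b i = 0 → a i = 0) (hne : ∃ i, a i ≠ (∑ j, a j) / (∑ j, b j) * b i) :
    klTerm (∑ i, a i) (∑ i, b i) < ∑ i, klTerm (a i) (b i) := by
  obtain ⟨i₀, hi₀⟩ := hne
  have hA : 0 < ∑ i, a i := (sum_nonneg fun i _ => ha i).lt_of_ne fun hA => hi₀ <| by
    rw [← hA, zero_div, zero_mul]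
    exact (sum_eq_zero_iff_of_nonneg fun i _ => ha i).mp hA.symm i₀ (mem_univ i₀)
  have hB : 0 < ∑ i, b i := (sum_nonneg fun i _ => hb i).lt_of_ne
    fun h => hA.ne' (sum_eq_zero_of_sum_eq_zero hb hab h.symm)
  have hr := div_pos hA hB
  have habr : ∀ i, (∑ j, a j) / (∑ j, b j) * b i = 0 → a i = 0 := fun i h =>
    hab i ((mul_eq_zero.mp h).resolve_left hr.ne')
  refine sub_pos.mp ((sum_klTerm_sub_klTerm_sum ha hab hA hB).symm ▸ sum_pos' (fun i _ => ?_)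
    ⟨i₀, mem_univ i₀, ?_⟩)
  · exact sub_nonneg.mpr (sub_le_klTerm (ha i) (mul_nonneg hr.le (hb i)) (habr i))
  · exact sub_pos.mpr (sub_lt_klTerm (ha i₀) (mul_nonneg hr.le (hb i₀)) (habr i₀) hi₀)

end LogSum

section Marginal

variable {U V : Type*} [Fintype U] [Fintype V] {π Q : U × V → ℝ}

lemma klDiv_eq_sum_sum_klTerm (π Q : U × V → ℝ) :
    klDiv π Q = ∑ v, ∑ u, klTerm (π (u, v)) (Q (u, v)) := by
  rw [klDiv_eq_sum_klTerm, Fintype.sum_prod_type, sum_comm]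

theorem klDiv_sndMarginal_lt (hπ : ∀ p, 0 ≤ π p) (hQ : ∀ p, 0 ≤ Q p)
    (habs : ∀ p, Q p = 0 → π p = 0)
    (hne : ∃ u v, π (u, v) ≠ (∑ u', π (u', v)) / (∑ u', Q (u', v)) * Q (u, v)) :
    klDiv (fun v => ∑ u, π (u, v)) (fun v => ∑ u, Q (u, v)) < klDiv π Q := by
  obtain ⟨u₀, v₀, hne⟩ := hne
  rw [klDiv_eq_sum_klTerm, klDiv_eq_sum_sum_klTerm]
  exact sum_lt_sum
    (fun v _ => klTerm_sum_le_sum_klTerm (fun u => hπ _) (fun u => hQ _) fun u => habs _)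
    ⟨v₀, mem_univ v₀,
      klTerm_sum_lt_sum_klTerm (fun u => hπ _) (fun u => hQ _) (fun u => habs _) ⟨u₀, hne⟩⟩

theorem klDivE_sndMarginal_lt (hπ : ∀ p, 0 ≤ π p) (hQ : ∀ p, 0 ≤ Q p)
    (hV : ∀ v, ∑ u, Q (u, v) = 0 → ∑ u, π (u, v) = 0)
    (hne : ∃ u v, π (u, v) ≠ (∑ u', π (u', v)) / (∑ u', Q (u', v)) * Q (u, v)) :
    klDivE (fun v => ∑ u, π (u, v)) (fun v => ∑ u, Q (u, v)) < klDivE π Q := by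
  rw [klDivE, if_pos hV, klDivE]
  split_ifs with habs
  · exact EReal.coe_lt_coe_iff.mpr (klDiv_sndMarginal_lt hπ hQ habs hne)
  · exact EReal.coe_lt_top _

end Marginal

theorem klDiv_gt_of_TU_mem_Pbar_general {U V Z : Type*}
    [Fintype U] [Fintype V] [Fintype Z]
    (P Q : U × V → ℝ) (hQ : IsPmf Q)
    (habs : ∀ p, Q p = 0 → P p = 0)
    (Γ0 Γ1 : Z → ℝ)
    (hTU : Ksup Γ0 Γ1 ≤
        klDivE (fun u => ∑ v, (∑ u', P (u', v)) * (Q (u, v) / ∑ u', Q (u', v)))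
          (fun u => ∑ v, P (u, v))) :
    ∀ π : U × V → ℝ, IsPmf π →
      (∀ v, ∑ u, π (u, v) = ∑ u, P (u, v)) →
      ¬ Ksup Γ0 Γ1 ≤ klDivE (fun u => ∑ v, π (u, v)) (fun u => ∑ v, P (u, v)) →
      klDivE (fun v => ∑ u, P (u, v)) (fun v => ∑ u, Q (u, v)) < klDivE π Q := by
  intro π hπ hmarg hπU
  have hV : ∀ v, ∑ u, Q (u, v) = 0 → ∑ u, π (u, v) = 0 := fun v hv => by
    rw [hmarg v]
    exact sum_eq_zero_of_sum_eq_zero (fun u => hQ.1 (u, v)) (fun u => habs (u, v)) hv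
  have hne : ∃ u v, π (u, v) ≠ (∑ u', π (u', v)) / (∑ u', Q (u', v)) * Q (u, v) := by
    by_contra! hprop
    refine hπU (hTU.trans_eq (congrArg (klDivE · _) (funext fun u => sum_congr rfl fun v _ => ?_)))
    rw [hprop u v, hmarg v]
    ring
  have hPV : (fun v => ∑ u, P (u, v)) = fun v => ∑ u, π (u, v) := funext fun v => (hmarg v).symm
  rw [hPV]
  exact klDivE_sndMarginal_lt hπ.1 hQ.1 hV hne

theorem klDiv_gt_of_TU_mem_Pbar {U V Z : Type*}
    [Fintype U] [Fintype V] [Fintype Z]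
    (P Q : U × V → ℝ) (hP : IsPmf P) (hQ : IsPmf Q)
    (habs : ∀ p, Q p = 0 → P p = 0)
    (Γ0 Γ1 : Z → ℝ) (hΓ0 : IsPmf Γ0) (hΓ1 : IsPmf Γ1)
    (hTU : Ksup Γ0 Γ1 ≤
        klDivE (fun u => ∑ v, (∑ u', P (u', v)) * (Q (u, v) / ∑ u', Q (u', v)))
          (fun u => ∑ v, P (u, v))) :
    ∀ π : U × V → ℝ, IsPmf π →
      (∀ v, ∑ u, π (u, v) = ∑ u, P (u, v)) →
      ¬ Ksup Γ0 Γ1 ≤ klDivE (fun u => ∑ v, π (u, v)) (fun u => ∑ v, P (u, v)) →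
      klDivE (fun v => ∑ u, P (u, v)) (fun v => ∑ u, Q (u, v)) < klDivE π Q :=
  klDiv_gt_of_TU_mem_Pbar_general P Q hQ habs Γ0 Γ1 hTU
end

section
/- Let α be a finite set, let Q be a probability mass function on α, let n ≥ 1, let X₁, …, Xₙ be i.i.d. with law Q, and let Π be any set of empirical types with denominator n on α. Then Pr[ the empirical type of (X₁,…,Xₙ) belongs to Π ] ≤ (n+1)^{|α|} · exp( −n · inf_{π ∈ Π} D(π ‖ Q) ). -/
/-!
A sequence `x` of type `π` has probability `Qⁿ(x) = exp(-n·D(π‖Q)) · πⁿ(x)` (both sides vanish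
when `π` charges a letter that `Q` does not). Summing over the type class of `π` therefore gives
at most `exp(-n·D(π‖Q))`, since `πⁿ` is a probability. There are at most `(n+1)^|α|` types, as a
type is determined by its letter counts in `{0, …, n}`.
-/

open scoped BigOperators Classical

/-- `π` is an empirical type with denominator `n` on `Z`: a pmf all of whose values are
integer multiples of `1/n`. -/
def IsType {Z : Type*} [Fintype Z] (n : ℕ) (π : Z → ℝ) : Prop :=
  IsPmf π ∧ ∀ a, ∃ k : ℕ, π a = (k : ℝ) / n

/-- The empirical type of the sequence `x ∈ αⁿ`. -/
noncomputable def empType {α : Type*} [Fintype α] {n : ℕ} (x : Fin n → α) : α → ℝ :=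
  fun a => ((Finset.univ.filter fun i => x i = a).card : ℝ) / n

/-- `exp(-n·D(P‖Q))`, with value `0` when `D(P‖Q) = +∞` (no absolute continuity),
matching the convention `exp(-∞) = 0`. -/
noncomputable def expNegKL {Z : Type*} [Fintype Z] (n : ℕ) (P Q : Z → ℝ) : ℝ :=
  if ∀ z, Q z = 0 → P z = 0 then Real.exp (-(n : ℝ) * klDiv P Q) else 0

open Finset

section EmpiricalTypes

variable {α : Type*} [Fintype α] {n : ℕ}

lemma prod_comp_eq_prod_pow_card_filter {M : Type*} [CommMonoid M] (f : α → M)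
    (x : Fin n → α) : ∏ i, f (x i) = ∏ a, f a ^ #{i | x i = a} := by
  simp_rw [← prod_fiberwise' univ x f, prod_const]

lemma card_filter_eq_mul_empType (x : Fin n → α) (a : α) :
    (#{i | x i = a} : ℝ) = n * empType x a := by
  rcases eq_or_ne n 0 with rfl | hn
  · simp
  · simp only [empType]
    field_simp

lemma empType_nonneg (x : Fin n → α) (a : α) : 0 ≤ empType x a := by
  unfold empType
  positivity

lemma card_image_empType_le :
    #(univ.image (empType : (Fin n → α) → α → ℝ)) ≤ (n + 1) ^ Fintype.card α := by
  have hcount (x : Fin n → α) (a : α) : #{i | x i = a} < n + 1 :=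
    Nat.lt_succ_of_le ((card_filter_le _ _).trans_eq (card_fin n))
  calc #(univ.image (empType : (Fin n → α) → α → ℝ))
      ≤ #(univ.image fun c : α → Fin (n + 1) => fun a => ((c a : ℕ) : ℝ) / n) :=
        card_le_card <| image_subset_iff.2 fun x _ =>
          mem_image.2 ⟨fun a => ⟨_, hcount x a⟩, mem_univ _, rfl⟩
    _ ≤ (n + 1) ^ Fintype.card α := card_image_le.trans (by simp)

end EmpiricalTypes

section Divergence

variable {Z : Type*} [Fintype Z]

lemma sub_le_mul_log_div {p q : ℝ} (hp : 0 < p) (hq : 0 < q) :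
    p - q ≤ p * Real.log (p / q) := by
  have hlog : Real.log (p / q) = -Real.log (q / p) := by rw [← Real.log_inv, inv_div]
  have h := mul_le_mul_of_nonneg_left (Real.log_le_sub_one_of_pos (div_pos hq hp)) hp.le
  rw [mul_sub, mul_div_cancel₀ _ hp.ne', mul_one] at h
  rw [hlog]
  linarith

lemma klDiv_nonneg_s14 {P Q : Z → ℝ} (hP : IsPmf P) (hQ : IsPmf Q)
    (hPQ : ∀ z, Q z = 0 → P z = 0) : 0 ≤ klDiv P Q := by
  have hterm (z : Z) : P z - Q z ≤ if 0 < P z then P z * Real.log (P z / Q z) else 0 := by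
    split_ifs with hPz
    · exact sub_le_mul_log_div hPz <|
        (hQ.1 z).lt_of_ne fun h => hPz.ne' (hPQ z h.symm)
    · linarith [hQ.1 z]
  calc (0 : ℝ) = ∑ z, (P z - Q z) := by rw [sum_sub_distrib, hP.2, hQ.2, sub_self]
    _ ≤ klDiv P Q := sum_le_sum fun z _ => hterm z

lemma expNegKL_nonneg (n : ℕ) (P Q : Z → ℝ) : 0 ≤ expNegKL n P Q := by
  unfold expNegKL
  split_ifs
  exacts [(Real.exp_pos _).le, le_rfl]

lemma expNegKL_le_one (n : ℕ) {P Q : Z → ℝ} (hP : IsPmf P) (hQ : IsPmf Q) :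
    expNegKL n P Q ≤ 1 := by
  unfold expNegKL
  split_ifs with hPQ
  · have := mul_nonneg n.cast_nonneg (klDiv_nonneg_s14 hP hQ hPQ)
    exact Real.exp_le_one_iff.2 (by linarith)
  · exact zero_le_one

lemma sum_prodPmf_le_one {P : Z → ℝ} (hP : IsPmf P) (n : ℕ) (s : Finset (Fin n → Z)) :
    ∑ x ∈ s, prodPmf P n x ≤ 1 := by
  have hnonneg (x : Fin n → Z) : 0 ≤ prodPmf P n x := prod_nonneg fun i _ => hP.1 (x i)
  calc ∑ x ∈ s, prodPmf P n x ≤ ∑ x, prodPmf P n x :=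
        sum_le_sum_of_subset_of_nonneg (subset_univ s) fun x _ _ => hnonneg x
    _ = 1 := by simp only [prodPmf]; rw [← Fintype.sum_pow, hP.2, one_pow]

end Divergence

section TypeClasses

variable {α : Type*} [Fintype α] {n : ℕ} {Q : α → ℝ}

lemma prodPmf_eq_expNegKL_mul (hQ : ∀ a, 0 ≤ Q a) (x : Fin n → α) :
    prodPmf Q n x = expNegKL n (empType x) Q * prodPmf (empType x) n x := by
  set π := empType x
  have hcount (a : α) : (#{i | x i = a} : ℝ) = n * π a := card_filter_eq_mul_empType x a
  unfold expNegKL prodPmf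
  simp_rw [prod_comp_eq_prod_pow_card_filter _ x]
  split_ifs with hπQ
  · rw [klDiv, mul_sum, Real.exp_sum, ← prod_mul_distrib]
    refine prod_congr rfl fun a _ => ?_
    split_ifs with hπa
    · have hQa : 0 < Q a := (hQ a).lt_of_ne fun h => hπa.ne' (hπQ a h.symm)
      have hexp : -(n : ℝ) * (π a * Real.log (π a / Q a)) =
          #{i | x i = a} * Real.log (Q a / π a) := by
        rw [hcount, ← inv_div, Real.log_inv]
        ring
      rw [hexp, Real.exp_nat_mul, Real.exp_log (div_pos hQa hπa), div_pow,
        div_mul_cancel₀ _ (pow_ne_zero _ hπa.ne')]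
    · have hπa0 : π a = 0 := le_antisymm (not_lt.1 hπa) (empType_nonneg x a)
      have hcard : (#{i | x i = a} : ℝ) = 0 := by rw [hcount, hπa0, mul_zero]
      simp [Nat.cast_eq_zero.1 hcard]
  · push Not at hπQ
    obtain ⟨a, hQa, hπa⟩ := hπQ
    have hcard : #{i | x i = a} ≠ 0 := fun h => hπa (by simp [π, empType, h])
    rw [zero_mul]
    exact prod_eq_zero (mem_univ a) (by rw [hQa, zero_pow hcard])

lemma sum_prodPmf_filter_empType_le (hQ : ∀ a, 0 ≤ Q a) {π : α → ℝ} (hπ : IsPmf π)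
    (s : Finset (Fin n → α)) :
    ∑ x ∈ s with empType x = π, prodPmf Q n x ≤ expNegKL n π Q := by
  calc ∑ x ∈ s with empType x = π, prodPmf Q n x
      = expNegKL n π Q * ∑ x ∈ s with empType x = π, prodPmf π n x := by
        rw [mul_sum]
        refine sum_congr rfl fun x hx => ?_
        rw [prodPmf_eq_expNegKL_mul hQ x, (mem_filter.1 hx).2]
    _ ≤ expNegKL n π Q :=
        mul_le_of_le_one_right (expNegKL_nonneg n π Q) (sum_prodPmf_le_one hπ n _)

end TypeClasses

theorem prob_empType_mem_le_general {α : Type*} [Fintype α]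
    (Q : α → ℝ) (hQ : IsPmf Q) (n : ℕ)
    (S : Set (α → ℝ)) (hS : ∀ π ∈ S, IsType n π) :
    ∑ x ∈ Finset.univ.filter (fun x : Fin n → α => empType x ∈ S), prodPmf Q n x ≤
      ((n : ℝ) + 1) ^ (Fintype.card α) * sSup {r : ℝ | ∃ π ∈ S, r = expNegKL n π Q} := by
  set R := {r : ℝ | ∃ π ∈ S, r = expNegKL n π Q}
  have hR : BddAbove R :=
    ⟨1, by rintro _ ⟨π, hπ, rfl⟩; exact expNegKL_le_one n (hS π hπ).1 hQ⟩
  have hR0 : 0 ≤ sSup R :=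
    Real.sSup_nonneg (by rintro _ ⟨π, -, rfl⟩; exact expNegKL_nonneg n π Q)
  set A := univ.filter fun x : Fin n → α => empType x ∈ S
  set T := (univ.image empType).filter (· ∈ S)
  have hT : (#T : ℝ) ≤ ((n : ℝ) + 1) ^ Fintype.card α := by
    exact_mod_cast (card_filter_le _ _).trans card_image_empType_le
  calc ∑ x ∈ A, prodPmf Q n x = ∑ π ∈ T, ∑ x ∈ A with empType x = π, prodPmf Q n x :=
        (sum_fiberwise_of_maps_to (fun x hx => by simp_all [T, A]) _).symm
    _ ≤ ∑ _π ∈ T, sSup R := sum_le_sum fun π hπ =>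
        have hπS := (mem_filter.1 hπ).2
        (sum_prodPmf_filter_empType_le hQ.1 (hS π hπS).1 A).trans (le_csSup hR ⟨π, hπS, rfl⟩)
    _ = #T * sSup R := by rw [sum_const, nsmul_eq_mul]
    _ ≤ ((n : ℝ) + 1) ^ Fintype.card α * sSup R := mul_le_mul_of_nonneg_right hT hR0

theorem prob_empType_mem_le {α : Type*} [Fintype α]
    (Q : α → ℝ) (hQ : IsPmf Q) (n : ℕ) (hn : 1 ≤ n)
    (S : Set (α → ℝ)) (hS : ∀ π ∈ S, IsType n π) :
    ∑ x ∈ Finset.univ.filter (fun x : Fin n → α => empType x ∈ S), prodPmf Q n x ≤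
      ((n : ℝ) + 1) ^ (Fintype.card α) * sSup {r : ℝ | ∃ π ∈ S, r = expNegKL n π Q} :=
  prob_empType_mem_le_general Q hQ n S hS
end

section
/- Let α be a finite set, let P be a probability mass function on α, let n ≥ 1, let X₁, …, Xₙ be i.i.d. with law P, and let μ > 0. Then Pr[ there exists a ∈ α with |π̂(a) − P(a)| > μ ] ≤ |α| / (4 μ² n), where π̂ denotes the empirical type of (X₁,…,Xₙ). -/
/-!
Fix a letter `a`. Then `n (π̂(a) - P(a)) = ∑ᵢ (1[Xᵢ = a] - P(a))` is a sum of `n` independent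
centred variables, so its second moment is `n P(a) (1 - P(a)) ≤ n / 4`. Chebyshev's inequality gives
`Pr[|π̂(a) - P(a)| > μ] ≤ 1 / (4μ²n)`, and a union bound over the `|α|` letters finishes the proof.
-/

open scoped BigOperators Classical

open Finset

theorem Finset.sum_filter_exists_le {ι κ M : Type*} [Fintype κ] [AddCommMonoid M] [PartialOrder M]
    [IsOrderedAddMonoid M] (s : Finset ι) (p : κ → ι → Prop) [∀ a, DecidablePred (p a)]
    [DecidablePred fun x => ∃ a, p a x] {w : ι → M} (hw : ∀ x ∈ s, 0 ≤ w x) :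
    ∑ x ∈ s with ∃ a, p a x, w x ≤ ∑ a, ∑ x ∈ s with p a x, w x := by
  simp_rw [sum_filter]
  rw [sum_comm]
  refine sum_le_sum fun x hx => ?_
  have hterm_nonneg : ∀ a ∈ univ, 0 ≤ if p a x then w x else 0 := fun a _ => by
    split_ifs
    exacts [hw x hx, le_rfl]
  split_ifs with h
  · obtain ⟨a, ha⟩ := h
    simpa [ha] using single_le_sum hterm_nonneg (mem_univ a)
  · exact sum_nonneg hterm_nonneg

theorem Finset.sq_mul_sum_filter_lt_abs_le {ι : Type*} (s : Finset ι) {w f : ι → ℝ}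
    (hw : ∀ x ∈ s, 0 ≤ w x) {μ : ℝ} (hμ : 0 ≤ μ) :
    μ ^ 2 * ∑ x ∈ s with μ < |f x|, w x ≤ ∑ x ∈ s, w x * f x ^ 2 := by
  rw [mul_sum]
  calc ∑ x ∈ s with μ < |f x|, μ ^ 2 * w x
      ≤ ∑ x ∈ s with μ < |f x|, w x * f x ^ 2 := sum_le_sum fun x hx => by
        rw [mem_filter] at hx
        have hsq : μ ^ 2 ≤ f x ^ 2 := by
          simpa only [sq_abs] using pow_le_pow_left₀ hμ hx.2.le 2
        nlinarith [hw x hx.1]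
    _ ≤ ∑ x ∈ s, w x * f x ^ 2 := sum_le_sum_of_subset_of_nonneg (filter_subset _ _)
        fun x hx _ => mul_nonneg (hw x hx) (sq_nonneg _)

section ProdPmf

variable {Z : Type*} [Fintype Z] {P : Z → ℝ} {n : ℕ}

theorem prodPmf_nonneg (hP : ∀ z, 0 ≤ P z) (x : Fin n → Z) : 0 ≤ prodPmf P n x :=
  prod_nonneg fun i _ => hP (x i)

theorem sum_prodPmf_mul_prod (P : Z → ℝ) (g : Fin n → Z → ℝ) :
    ∑ x, prodPmf P n x * ∏ k, g k (x k) = ∏ k, ∑ z, P z * g k z := by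
  simp only [Fintype.prod_sum, prodPmf, prod_mul_distrib]

theorem sum_prodPmf_mul_apply_mul_apply (hP : ∑ z, P z = 1) {Y : Z → ℝ} (hY : ∑ z, P z * Y z = 0)
    (i j : Fin n) :
    ∑ x, prodPmf P n x * (Y (x i) * Y (x j)) = if i = j then ∑ z, P z * Y z ^ 2 else 0 := by
  -- Under `prodPmf` the coordinates are independent, so write the integrand as a product over them.
  set g : Fin n → Z → ℝ := fun k z => (if k = i then Y z else 1) * (if k = j then Y z else 1)
  have hprod : ∀ x : Fin n → Z, Y (x i) * Y (x j) = ∏ k, g k (x k) := fun x => by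
    rw [prod_mul_distrib]
    simp
  simp only [hprod, sum_prodPmf_mul_prod]
  split_ifs with hij
  · subst hij
    rw [prod_eq_single_of_mem i (mem_univ i) fun k _ hk => by simp [g, hk, hP]]
    simp [g, sq]
  · exact prod_eq_zero (mem_univ i) (by simpa [g, hij] using hY)

theorem sum_prodPmf_mul_sq_sum (hP : ∑ z, P z = 1) {Y : Z → ℝ} (hY : ∑ z, P z * Y z = 0) :
    ∑ x, prodPmf P n x * (∑ i, Y (x i)) ^ 2 = n * ∑ z, P z * Y z ^ 2 := by
  have hexpand : ∀ x : Fin n → Z, prodPmf P n x * (∑ i, Y (x i)) ^ 2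
      = ∑ i, ∑ j, prodPmf P n x * (Y (x i) * Y (x j)) := fun x => by
    rw [sq, sum_mul_sum, mul_sum]
    simp only [mul_sum]
  simp only [hexpand]
  rw [sum_comm]
  simp [sum_comm (γ := Fin n → Z), sum_prodPmf_mul_apply_mul_apply hP hY]

end ProdPmf

section EmpType

variable {α : Type*} [Fintype α] {P : α → ℝ} {n : ℕ}

theorem natCast_mul_empType_sub (hn : n ≠ 0) (x : Fin n → α) (a : α) (p : ℝ) :
    n * (empType x a - p) = ∑ i, ((if x i = a then 1 else 0) - p) := by
  have hn' : (n : ℝ) ≠ 0 := by exact_mod_cast hn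
  simp [empType, sum_sub_distrib, sum_boole, mul_sub, mul_div_cancel₀, hn']

theorem sum_mul_indicator_sub (hP : ∑ z, P z = 1) (a : α) :
    ∑ z, P z * ((if z = a then 1 else 0) - P a) = 0 := by
  simp [mul_sub, sum_sub_distrib, ← sum_mul, hP]

theorem sum_mul_sq_indicator_sub (hP : ∑ z, P z = 1) (a : α) :
    ∑ z, P z * ((if z = a then 1 else 0) - P a) ^ 2 = P a * (1 - P a) := by
  have hsplit : ∀ z, P z * ((if z = a then 1 else 0) - P a) ^ 2
      = (if z = a then P z * (1 - 2 * P a) else 0) + P z * P a ^ 2 := fun z => by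
    split_ifs <;> ring
  simp only [hsplit, sum_add_distrib, sum_ite_eq', mem_univ, if_true, ← sum_mul, hP]
  ring

theorem sum_prodPmf_mul_sq_empType_sub (hP : ∑ z, P z = 1) (hn : n ≠ 0) (a : α) :
    ∑ x, prodPmf P n x * (empType x a - P a) ^ 2 = P a * (1 - P a) / n := by
  have hn' : (n : ℝ) ≠ 0 := by exact_mod_cast hn
  have hscaled := sum_prodPmf_mul_sq_sum (n := n) hP (sum_mul_indicator_sub hP a)
  simp only [← natCast_mul_empType_sub hn, mul_pow, sum_mul_sq_indicator_sub hP a] at hscaled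
  rw [eq_div_iff hn']
  apply mul_left_cancel₀ hn'
  rw [← hscaled, sum_mul, mul_sum]
  exact sum_congr rfl fun x _ => by ring

theorem sum_prodPmf_empType_far_le (hP : IsPmf P) (hn : n ≠ 0) {μ : ℝ} (hμ : 0 < μ) (a : α) :
    ∑ x with μ < |empType x a - P a|, prodPmf P n x ≤ 1 / (4 * μ ^ 2 * n) := by
  have hn' : (0 : ℝ) < n := by positivity
  have hcheb := sq_mul_sum_filter_lt_abs_le univ (fun x _ => prodPmf_nonneg hP.1 x) hμ.le
    (f := fun x : Fin n → α => empType x a - P a)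
  rw [sum_prodPmf_mul_sq_empType_sub hP.2 hn] at hcheb
  have hbernoulli : P a * (1 - P a) ≤ 1 / 4 := by nlinarith [sq_nonneg (P a - 1 / 2)]
  rw [le_div_iff₀ (by positivity)]
  calc (∑ x with μ < |empType x a - P a|, prodPmf P n x) * (4 * μ ^ 2 * n)
      = 4 * n * (μ ^ 2 * ∑ x with μ < |empType x a - P a|, prodPmf P n x) := by ring
    _ ≤ 4 * n * (P a * (1 - P a) / n) := by gcongr
    _ = 4 * (P a * (1 - P a)) := by field_simp
    _ ≤ 1 := by linarith

end EmpType

theorem prob_empType_far_le {α : Type*} [Fintype α]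
    (P : α → ℝ) (hP : IsPmf P) (n : ℕ) (hn : 1 ≤ n) (μ : ℝ) (hμ : 0 < μ) :
    ∑ x ∈ Finset.univ.filter (fun x : Fin n → α => ∃ a, μ < |empType x a - P a|),
      prodPmf P n x ≤ (Fintype.card α : ℝ) / (4 * μ ^ 2 * n) :=
  calc _ ≤ ∑ a, ∑ x with μ < |empType x a - P a|, prodPmf P n x :=
        sum_filter_exists_le univ _ fun x _ => prodPmf_nonneg hP.1 x
    _ ≤ ∑ _a : α, 1 / (4 * μ ^ 2 * n) :=
        sum_le_sum fun a _ => sum_prodPmf_empType_far_le hP (by omega) hμ a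
    _ = (Fintype.card α : ℝ) / (4 * μ ^ 2 * n) := by simp [div_eq_mul_inv]
end
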